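/- Let φ_N be a solution of the N-periodic Riccati system and \hat{φ}_N^k(t) := Σ_{j=0}^{N−1} φ_N^j(t) exp(−2π√(−1) jk / N) its discrete Fourier transform. Then \hat{φ}_N^k(t) = f_t(k/N) for every k = 0,1,…,N−1 and t ∈ [0,T] (with the convention f_t(0) := 0), and consequently φ_N^j(t) = (1/N) Σ_{k=0}^{N−1} f_t(k/N) exp(2π√(−1) jk / N) for every j = 0,1,…,N−1 and t ∈ [0,T]. -/

import Mathlib

open scoped BigOperators

/-- `𝔯(x) := (2(1 − cos(2πx)))^{1/4}`. -/
noncomputable def frakr (x : ℝ) : ℝ := (2 * (1 - Real.cos (2 * Real.pi * x))) ^ ((1:ℝ)/4)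

/-- `θ(x) := (1/2) arctan( sin(2πx) / (1 − cos(2πx)) )`. -/
noncomputable def thetaCat (x : ℝ) : ℝ :=
  (1/2) * Real.arctan (Real.sin (2 * Real.pi * x) / (1 - Real.cos (2 * Real.pi * x)))

/-- The complex number `𝔯(x) e^{√(−1) θ(x)}`. -/
noncomputable def rTheta (x : ℝ) : ℂ := (frakr x : ℂ) * Complex.exp (Complex.I * (thetaCat x : ℂ))

/-- `𝔞⁺(x) := √ε + c 𝔯(x) e^{√(−1)θ(x)}`. -/
noncomputable def aPlus (ε c : ℝ) (x : ℝ) : ℂ := (Real.sqrt ε : ℂ) + (c : ℂ) * rTheta x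

/-- `𝔞⁻(x) := √ε − c 𝔯(x) e^{√(−1)θ(x)}`. -/
noncomputable def aMinus (ε c : ℝ) (x : ℝ) : ℂ := (Real.sqrt ε : ℂ) - (c : ℂ) * rTheta x

/-- `𝔢_t⁺(x) := exp( √ε 𝔯(x) e^{√(−1)θ(x)} (T−t) )`. -/
noncomputable def ePlus (T ε : ℝ) (t x : ℝ) : ℂ :=
  Complex.exp ((Real.sqrt ε : ℂ) * rTheta x * ((T : ℂ) - (t : ℂ)))

/-- `𝔢_t⁻(x) := exp( −√ε 𝔯(x) e^{√(−1)θ(x)} (T−t) )`. -/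
noncomputable def eMinus (T ε : ℝ) (t x : ℝ) : ℂ :=
  Complex.exp (-((Real.sqrt ε : ℂ) * rTheta x * ((T : ℂ) - (t : ℂ))))

/-- The Catalan generating-type function
`f_t(x) := √ε 𝔯(x) e^{√(−1)θ(x)} (𝔞⁺𝔢_t⁺ − 𝔞⁻𝔢_t⁻)/(𝔞⁺𝔢_t⁺ + 𝔞⁻𝔢_t⁻)`, for `x ∈ (0,1)`. -/
noncomputable def fCat (T ε c : ℝ) (t x : ℝ) : ℂ :=
  (Real.sqrt ε : ℂ) * rTheta x *
    ((aPlus ε c x * ePlus T ε t x - aMinus ε c x * eMinus T ε t x) /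
      (aPlus ε c x * ePlus T ε t x + aMinus ε c x * eMinus T ε t x))

/-- The extension of `f` to `[0,1]` by `f_t(0) := 0` and `f_t(1) := 0`. -/
noncomputable def fCatExt (T ε c : ℝ) (t x : ℝ) : ℂ :=
  if x = 0 ∨ x = 1 then 0 else fCat T ε c t x

/-- The sequence ε^i with integer index. -/
noncomputable def epsZ (ε : ℝ) : ℤ → ℝ := fun i => if i = 0 then ε else if i = 1 then -ε else 0

/-- `φ` is a solution of the `N`-periodic Riccati system on `[0,T]`. -/
def IsPerRiccatiSol (T ε c : ℝ) (N : ℕ) (φ : ℤ → ℝ → ℝ) : Prop :=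
  (∀ i : ℤ, φ (i + (N : ℤ)) = φ i) ∧
  (∀ i : ℕ, i < N → ∀ t ∈ Set.Icc (0:ℝ) T,
    HasDerivWithinAt (φ (i : ℤ))
      ((∑ j ∈ Finset.range N, φ (j : ℤ) t * φ ((N : ℤ) + (i : ℤ) - (j : ℤ)) t) - epsZ ε (i : ℤ))
      (Set.Icc (0:ℝ) T) t) ∧
  φ 0 T = c ∧ φ 1 T = -c ∧ ∀ i : ℕ, 2 ≤ i → i < N → φ (i : ℤ) T = 0

/-- The discrete Fourier transform of `(φ^j)_{j=0,…,N-1}` at frequency `k`: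
`\hatφ^k(t) := ∑_{j=0}^{N-1} φ^j(t) exp(−2π√(−1) jk/N)`. -/
noncomputable def dft (N : ℕ) (φ : ℤ → ℝ → ℝ) (k : ℕ) (t : ℝ) : ℂ :=
  ∑ j ∈ Finset.range N,
    (φ (j : ℤ) t : ℂ) * Complex.exp (-(2 * Real.pi * Complex.I * (j : ℂ) * (k : ℂ)) / (N : ℂ))

/-!
Multiplying the `j`-th Riccati equation by `ω ^ j`, `ω = exp (-2πik/N)`, and summing over `j`
turns the cyclic convolution into a square: the Fourier coefficient `\hatφ^k` solves the scalar
Riccati equation `y' = y² - ε (1 - ω)` with `y T = c (1 - ω)`. Since `𝔯(x) e^{iθ(x)}` is the square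
root of `1 - exp (-2πix)` with nonnegative real part, `f_t(k/N)` is the explicit `tanh`-type
solution of the same terminal value problem, and its denominator never vanishes on `t ≤ T`.
Uniqueness for this locally Lipschitz ODE gives `\hatφ^k = f(k/N)`; the second formula is then
discrete Fourier inversion, from the orthogonality of the `N`-th roots of unity.
-/

open Finset Complex
open scoped Real

theorem Function.Periodic.sum_range_add {M : Type*} [AddCommMonoid M] {H : ℕ → M} {N : ℕ}
    (hH : Function.Periodic H N) (a : ℕ) :
    ∑ j ∈ range N, H (j + a) = ∑ j ∈ range N, H j := by
  induction a generalizing H with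
  | zero => rfl
  | succ a ih =>
    have hshift : ∑ j ∈ range N, H (j + 1) = ∑ j ∈ range N, H j := by
      cases N with
      | zero => rfl
      | succ n => rw [sum_range_succ, sum_range_succ' H, show H (n + 1) = H 0 by simpa using hH 0]
    simpa only [← add_assoc, add_right_comm _ a 1] using
      (ih (hH.add_const 1)).trans hshift

theorem sum_range_conv_mul_pow {R : Type*} [CommRing R] {N : ℕ} {u : ℤ → R}
    (hu : Function.Periodic u N) {ω : R} (hω : ω ^ N = 1) :
    ∑ j ∈ range N, (∑ l ∈ range N, u l * u (N + j - l)) * ω ^ j =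
      (∑ j ∈ range N, u j * ω ^ j) ^ 2 := by
  set v : ℕ → R := fun m => u m * ω ^ m
  have hv : Function.Periodic v N := fun m => by
    simp only [v, Nat.cast_add, hu _, pow_add, hω, mul_one]
  have hterm : ∀ j l : ℕ, l ∈ range N →
      u l * u (N + j - l) * ω ^ j = v l * v (j + (N - l)) := fun j l hl => by
    have hlN : l ≤ N := (mem_range.mp hl).le
    have hcast : ((N : ℤ) + j - l) = ((j + (N - l) : ℕ) : ℤ) := by push_cast [hlN]; ring
    have hexp : ω ^ j = ω ^ l * ω ^ (j + (N - l)) := by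
      rw [← pow_add, show l + (j + (N - l)) = j + N by omega, pow_add, hω, mul_one]
    simp only [v, hcast, hexp]
    ring
  calc ∑ j ∈ range N, (∑ l ∈ range N, u l * u (N + j - l)) * ω ^ j
      = ∑ l ∈ range N, v l * ∑ j ∈ range N, v (j + (N - l)) := by
        simp only [sum_mul, mul_sum]
        rw [sum_comm]
        exact sum_congr rfl fun l hl => sum_congr rfl fun j _ => hterm j l hl
    _ = ∑ l ∈ range N, v l * ∑ j ∈ range N, v j := by
        simp only [hv.sum_range_add]
    _ = (∑ j ∈ range N, u j * ω ^ j) ^ 2 := by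
        rw [← sum_mul, sq]

theorem sum_range_mul_pow_eq_add_of_two_le {R : Type*} [CommSemiring R] {N : ℕ} (hN : 2 ≤ N)
    (a : ℕ → R) (ω : R) (ha : ∀ i, 2 ≤ i → i < N → a i = 0) :
    ∑ i ∈ range N, a i * ω ^ i = a 0 + a 1 * ω := by
  rw [sum_eq_add_of_mem 0 1 (mem_range.mpr (by omega)) (mem_range.mpr hN) zero_ne_one
    fun i hi hi01 => by rw [ha i (by omega) (mem_range.mp hi), zero_mul]]
  simp

theorem IsPrimitiveRoot.sum_range_inv_pow_mul_pow {K : Type*} [Field K] {ζ : K} {N : ℕ}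
    (hζ : IsPrimitiveRoot ζ N) {j l : ℕ} (hj : j < N) (hl : l < N) :
    ∑ k ∈ range N, (ζ ^ (l * k))⁻¹ * ζ ^ (j * k) = if l = j then (N : K) else 0 := by
  have hζ0 : ζ ≠ 0 := hζ.ne_zero (by omega)
  set η := ζ ^ j / ζ ^ l
  have hterm : ∀ k, (ζ ^ (l * k))⁻¹ * ζ ^ (j * k) = η ^ k := fun k => by
    rw [div_pow, ← pow_mul, ← pow_mul, div_eq_inv_mul]
  simp only [hterm]
  split_ifs with hlj
  · simp [η, hlj, hζ0]
  · have hη : η ≠ 1 := fun h =>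
      hlj (hζ.pow_inj hl hj ((div_eq_one_iff_eq (pow_ne_zero _ hζ0)).mp h).symm)
    have hηN : η ^ N = 1 := by
      rw [div_pow, ← pow_mul, ← pow_mul, mul_comm j, mul_comm l, pow_mul, pow_mul, hζ.pow_eq_one,
        one_pow, one_pow, div_one]
    rw [geom_sum_eq hη N, hηN, sub_self, zero_div]

theorem IsPrimitiveRoot.sum_range_sum_range_inv_pow_mul_pow {K : Type*} [Field K] {ζ : K}
    {N : ℕ} (hζ : IsPrimitiveRoot ζ N) (u : ℕ → K) {j : ℕ} (hj : j < N) :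
    ∑ k ∈ range N, (∑ l ∈ range N, u l * (ζ ^ (l * k))⁻¹) * ζ ^ (j * k) = N * u j := by
  simp only [sum_mul]
  rw [sum_comm]
  simp only [mul_assoc, ← mul_sum]
  rw [sum_congr rfl fun l hl => by rw [hζ.sum_range_inv_pow_mul_pow hj (mem_range.mp hl)]]
  simp [hj, mul_comm]

theorem Complex.arg_eq_arctan_of_re_pos {z : ℂ} (hz : 0 < z.re) :
    arg z = Real.arctan (z.im / z.re) := by
  have h := abs_lt.mp (abs_arg_lt_pi_div_two_iff.mpr (Or.inl hz))
  rw [← tan_arg, Real.arctan_tan h.1 h.2]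

theorem Complex.sq_normSq_rpow_mul_exp_half_arctan {z : ℂ} (hz : 0 < z.re) :
    (((normSq z ^ (1 / 4 : ℝ) : ℝ) : ℂ) *
        exp (I * ((1 / 2 * Real.arctan (z.im / z.re) : ℝ) : ℂ))) ^ 2 = z := by
  have hmod : (normSq z ^ (1 / 4 : ℝ)) ^ 2 = ‖z‖ := by
    rw [← Real.rpow_natCast, ← Real.rpow_mul (normSq_nonneg z), norm_def, Real.sqrt_eq_rpow]
    norm_num
  rw [mul_pow, ← ofReal_pow, hmod, ← exp_nat_mul, ← arg_eq_arctan_of_re_pos hz]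
  convert norm_mul_exp_arg_mul_I z using 3
  push_cast
  ring

theorem frakr_zero : frakr 0 = 0 := by
  simp [frakr]

theorem rTheta_sq (x : ℝ) : rTheta x ^ 2 = 1 - exp (-(2 * π * x * I)) := by
  set α := 2 * π * x
  set z := 1 - exp (-(α * I)) with hz_def
  have hre : z.re = 1 - Real.cos α := by simp [z, exp_re, Real.cos_neg]
  have him : z.im = Real.sin α := by simp [z, exp_im, Real.sin_neg]
  have hnormSq : normSq z = 2 * (1 - Real.cos α) := by
    rw [normSq_apply, hre, him]
    nlinarith [Real.sin_sq_add_cos_sq α]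
  have hrTheta : rTheta x = ((normSq z ^ (1 / 4 : ℝ) : ℝ) : ℂ) *
      exp (I * ((1 / 2 * Real.arctan (z.im / z.re) : ℝ) : ℂ)) := by
    rw [hre, him, hnormSq]; rfl
  have hz : (-(2 * π * x * I)) = -(α * I) := by simp [α]
  rw [hz, hrTheta]
  rcases (sub_nonneg.mpr (Real.cos_le_one α)).lt_or_eq with hpos | hzero
  · exact sq_normSq_rpow_mul_exp_half_arctan (hre ▸ hpos)
  · have hz0 : z = 0 := by
      rw [← normSq_eq_zero, hnormSq, ← hzero, mul_zero]
    rw [← hz_def, hz0, map_zero, Real.zero_rpow (by norm_num)]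
    simp

theorem rTheta_re_pos_or_eq_zero (x : ℝ) : 0 < (rTheta x).re ∨ rTheta x = 0 := by
  have hcos : 0 < Real.cos (thetaCat x) := by
    refine Real.cos_pos_of_mem_Ioo ⟨?_, ?_⟩ <;> simp only [thetaCat] <;>
      linarith [Real.neg_pi_div_two_lt_arctan (Real.sin (2 * π * x) / (1 - Real.cos (2 * π * x))),
        Real.arctan_lt_pi_div_two (Real.sin (2 * π * x) / (1 - Real.cos (2 * π * x))), Real.pi_pos]
  have hre : (rTheta x).re = frakr x * Real.cos (thetaCat x) := by
    simp [rTheta, Complex.exp_re, Complex.exp_im]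
  have hr : 0 ≤ frakr x := Real.rpow_nonneg (by linarith [Real.cos_le_one (2 * π * x)]) _
  rcases hr.lt_or_eq with hr | hr
  · exact Or.inl (hre ▸ mul_pos hr hcos)
  · exact Or.inr (by simp [rTheta, ← hr])

/-- `κ tanh (κ (T - t) + log (A / B) / 2)`, a solution of `y' = y² - κ²`. -/
noncomputable def riccatiTanh (κ A B : ℂ) (T t : ℝ) : ℂ :=
  κ * ((A * exp (κ * (T - t)) - B * exp (-(κ * (T - t)))) /
    (A * exp (κ * (T - t)) + B * exp (-(κ * (T - t)))))

theorem riccatiTanh_self (κ A B : ℂ) (T : ℝ) : riccatiTanh κ A B T T = κ * ((A - B) / (A + B)) := by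
  simp [riccatiTanh]

theorem hasDerivAt_riccatiTanh {κ A B : ℂ} {T t : ℝ}
    (hden : A * exp (κ * (T - t)) + B * exp (-(κ * (T - t))) ≠ 0) :
    HasDerivAt (riccatiTanh κ A B T) (riccatiTanh κ A B T t ^ 2 - κ ^ 2) t := by
  have hlin : HasDerivAt (fun s : ℝ => κ * ((T : ℂ) - s)) (-κ) t := by
    simpa using ((hasDerivAt_id t).ofReal_comp.const_sub (T : ℂ)).const_mul κ
  have hP := hlin.cexp
  have hM := hlin.fun_neg.cexp
  have hq := (((hP.const_mul A).fun_sub (hM.const_mul B)).fun_div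
    ((hP.const_mul A).fun_add (hM.const_mul B)) hden).const_mul κ
  refine hq.congr_deriv ?_
  simp only [riccatiTanh]
  field_simp
  ring

theorem mul_exp_add_mul_exp_neg_ne_zero {A B z : ℂ} (hBA : ‖B‖ ≤ ‖A‖) (hAB : A + B ≠ 0)
    (hz : 0 < z.re ∨ z = 0) : A * exp z + B * exp (-z) ≠ 0 := by
  rcases hz with hz | rfl
  · have hA : 0 < ‖A‖ := norm_pos_iff.mpr fun hA => hAB (by
      rw [hA, norm_zero, norm_le_zero_iff] at hBA; rw [hA, hBA, add_zero])
    have hlt : ‖B * exp (-z)‖ < ‖A * exp z‖ := by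
      rw [norm_mul, norm_mul, norm_exp, norm_exp, neg_re]
      calc ‖B‖ * Real.exp (-z.re) ≤ ‖A‖ * Real.exp (-z.re) := by gcongr
        _ < ‖A‖ * Real.exp z.re := by gcongr; linarith
    intro h
    rw [eq_neg_of_add_eq_zero_left h, norm_neg] at hlt
    exact lt_irrefl _ hlt
  · simpa using hAB

theorem norm_ofReal_sub_le_norm_ofReal_add {a : ℝ} (ha : 0 ≤ a) {v : ℂ} (hv : 0 ≤ v.re) :
    ‖(a : ℂ) - v‖ ≤ ‖(a : ℂ) + v‖ := by
  rw [← sq_le_sq₀ (norm_nonneg _) (norm_nonneg _), ← normSq_eq_norm_sq, ← normSq_eq_norm_sq,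
    normSq_apply, normSq_apply]
  simp only [sub_re, sub_im, add_re, add_im, ofReal_re, ofReal_im]
  nlinarith [mul_nonneg ha hv]

open Set Filter Topology in
theorem eqOn_Icc_of_hasDerivWithinAt_of_contDiff {E : Type*} [NormedAddCommGroup E]
    [NormedSpace ℝ E] {v : E → E} (hv : ContDiff ℝ 1 v) {F G : ℝ → E} {a b : ℝ}
    (hF : ∀ t ∈ Icc a b, HasDerivWithinAt F (v (F t)) (Icc a b) t)
    (hG : ∀ t ∈ Icc a b, HasDerivWithinAt G (v (G t)) (Icc a b) t) (hb : F b = G b) :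
    EqOn F G (Icc a b) := by
  have hFc : ContinuousOn F (Icc a b) := fun t ht => (hF t ht).continuousWithinAt
  have hGc : ContinuousOn G (Icc a b) := fun t ht => (hG t ht).continuousWithinAt
  -- both trajectories stay in a compact set, on which `v` is Lipschitz
  set K := F '' Icc a b ∪ G '' Icc a b
  obtain ⟨L, hL⟩ := hv.locallyLipschitz.locallyLipschitzOn.exists_lipschitzOnWith_of_compact
    ((isCompact_Icc.image_of_continuousOn hFc).union (isCompact_Icc.image_of_continuousOn hGc))
  have hleft : ∀ t ∈ Ioc a b, Icc a b ∈ 𝓝[≤] t := fun t ht =>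
    mem_of_superset (Icc_mem_nhdsLE ht.1) (Icc_subset_Icc_right ht.2)
  exact ODE_solution_unique_of_mem_Icc_left (v := fun _ => v) (s := fun _ => K)
    (fun _ _ => hL) hFc
    (fun t ht => (hF t (Ioc_subset_Icc_self ht)).mono_of_mem_nhdsWithin (hleft t ht))
    (fun t ht => Or.inl (mem_image_of_mem F (Ioc_subset_Icc_self ht))) hGc
    (fun t ht => (hG t (Ioc_subset_Icc_self ht)).mono_of_mem_nhdsWithin (hleft t ht))
    (fun t ht => Or.inr (mem_image_of_mem G (Ioc_subset_Icc_self ht))) hb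

theorem fCat_eq_riccatiTanh (T ε c t x : ℝ) :
    fCat T ε c t x =
      riccatiTanh (Real.sqrt ε * rTheta x) (aPlus ε c x) (aMinus ε c x) T t := rfl

theorem fCat_self {ε : ℝ} (hε : 0 < ε) (T c x : ℝ) : fCat T ε c T x = c * rTheta x ^ 2 := by
  have hsqrt : (Real.sqrt ε : ℂ) ≠ 0 := ofReal_ne_zero.mpr (Real.sqrt_pos.mpr hε).ne'
  rw [fCat_eq_riccatiTanh, riccatiTanh_self, aPlus, aMinus, add_sub_sub_cancel,
    add_add_sub_cancel, ← two_mul, ← two_mul]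
  field_simp

-- `𝔯 0 = 0` makes the formula for `f` vanish at `0` too, matching the convention `f_t(0) := 0`.
theorem fCatExt_eq_fCat {x : ℝ} (hx : x ≠ 1) (T ε c t : ℝ) :
    fCatExt T ε c t x = fCat T ε c t x := by
  rcases eq_or_ne x 0 with rfl | hx0
  · simp [fCatExt, fCat, rTheta, frakr_zero]
  · simp [fCatExt, hx0, hx]

theorem hasDerivAt_fCat {ε c : ℝ} (hε : 0 < ε) (hc : 0 ≤ c) {T t : ℝ} (ht : t ≤ T) (x : ℝ) :
    HasDerivAt (fun s => fCat T ε c s x) (fCat T ε c t x ^ 2 - ε * rTheta x ^ 2) t := by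
  have hnorm : ‖aMinus ε c x‖ ≤ ‖aPlus ε c x‖ := by
    refine norm_ofReal_sub_le_norm_ofReal_add (Real.sqrt_nonneg ε) ?_
    rw [re_ofReal_mul]
    rcases rTheta_re_pos_or_eq_zero x with h | h
    · positivity
    · simp [h]
  have hsum : aPlus ε c x + aMinus ε c x ≠ 0 := by
    rw [aPlus, aMinus, add_add_sub_cancel, ← two_mul]
    exact mul_ne_zero two_ne_zero (ofReal_ne_zero.mpr (Real.sqrt_pos.mpr hε).ne')
  have hz : 0 < (Real.sqrt ε * rTheta x * (T - t)).re ∨ Real.sqrt ε * rTheta x * (T - t) = 0 := by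
    have hz_eq : (Real.sqrt ε : ℂ) * rTheta x * (T - t) =
        ((Real.sqrt ε * (T - t) : ℝ) : ℂ) * rTheta x := by
      push_cast; ring
    rw [hz_eq, re_ofReal_mul]
    rcases (sub_nonneg.mpr ht).lt_or_eq with htT | htT
    · rcases rTheta_re_pos_or_eq_zero x with h | h
      · exact Or.inl (mul_pos (mul_pos (Real.sqrt_pos.mpr hε) htT) h)
      · simp [h]
    · simp [← htT]
  have hsq : ((Real.sqrt ε : ℂ) * rTheta x) ^ 2 = ε * rTheta x ^ 2 := by
    rw [mul_pow, ← ofReal_pow, Real.sq_sqrt hε.le]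
  simpa only [fCat_eq_riccatiTanh, hsq] using
    hasDerivAt_riccatiTanh (mul_exp_add_mul_exp_neg_ne_zero hnorm hsum hz)

theorem dft_eq_sum_mul_inv_pow (N : ℕ) (φ : ℤ → ℝ → ℝ) (k : ℕ) (t : ℝ) :
    dft N φ k t = ∑ j ∈ range N, (φ j t : ℂ) * (exp (2 * π * I / N) ^ (j * k))⁻¹ := by
  refine sum_congr rfl fun j _ => ?_
  rw [← exp_nat_mul, ← exp_neg]
  congr 2
  push_cast
  ring

theorem sum_range_dft_mul_exp {N : ℕ} (hN : N ≠ 0) (φ : ℤ → ℝ → ℝ) {j : ℕ} (hj : j < N)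
    (t : ℝ) :
    1 / (N : ℂ) * ∑ k ∈ range N, dft N φ k t * exp (2 * π * I * j * k / N) = φ j t := by
  have hζ := isPrimitiveRoot_exp N hN
  have hkernel : ∀ k : ℕ, exp (2 * π * I * j * k / N) = exp (2 * π * I / N) ^ (j * k) :=
    fun k => by rw [← exp_nat_mul]; push_cast; ring_nf
  simp only [dft_eq_sum_mul_inv_pow, hkernel,
    hζ.sum_range_sum_range_inv_pow_mul_pow (fun l => (φ l t : ℂ)) hj]
  field_simp

namespace IsPerRiccatiSol

variable {T ε c : ℝ} {N : ℕ} {φ : ℤ → ℝ → ℝ}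

theorem sum_mul_pow_terminal (hN : 2 ≤ N) (hφ : IsPerRiccatiSol T ε c N φ) (ω : ℂ) :
    ∑ j ∈ range N, (φ j T : ℂ) * ω ^ j = c * (1 - ω) := by
  obtain ⟨-, -, h0, h1, hrest⟩ := hφ
  rw [sum_range_mul_pow_eq_add_of_two_le hN _ ω fun i hi hiN => by simp [hrest i hi hiN]]
  push_cast [h0, h1]
  ring

theorem hasDerivWithinAt_sum_mul_pow (hN : 2 ≤ N) (hφ : IsPerRiccatiSol T ε c N φ) {ω : ℂ}
    (hω : ω ^ N = 1) {t : ℝ} (ht : t ∈ Set.Icc 0 T) :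
    HasDerivWithinAt (fun s => ∑ j ∈ range N, (φ j s : ℂ) * ω ^ j)
      ((∑ j ∈ range N, (φ j t : ℂ) * ω ^ j) ^ 2 - ε * (1 - ω)) (Set.Icc 0 T) t := by
  obtain ⟨hper, hderiv, -⟩ := hφ
  have hu : Function.Periodic (fun m => (φ m t : ℂ)) N := fun m => by simp [hper m]
  have heps : ∑ j ∈ range N, (epsZ ε j : ℂ) * ω ^ j = ε * (1 - ω) := by
    rw [sum_range_mul_pow_eq_add_of_two_le hN _ ω fun i hi hiN => by
      simp [epsZ, show i ≠ 0 by omega, show (i : ℤ) ≠ 1 by omega]]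
    simp [epsZ]
    ring
  refine (HasDerivWithinAt.fun_sum fun j hj =>
    ((hderiv j (mem_range.mp hj) t ht).ofReal_comp).mul_const (ω ^ j)).congr_deriv ?_
  simp only [ofReal_sub, ofReal_sum, ofReal_mul, sub_mul, sum_sub_distrib]
  rw [sum_range_conv_mul_pow hu hω, heps]

theorem dft_eqOn_fCat (hε : 0 < ε) (hc : 0 ≤ c) (hN : 2 ≤ N) (hφ : IsPerRiccatiSol T ε c N φ)
    (k : ℕ) :
    Set.EqOn (dft N φ k) (fun t => fCat T ε c t ((k : ℝ) / N)) (Set.Icc 0 T) := by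
  set ζ := exp (2 * π * I / N) with hζ_def
  have hζ : IsPrimitiveRoot ζ N := isPrimitiveRoot_exp N (by omega)
  set ω := (ζ ^ k)⁻¹ with hω_def
  have hω : ω ^ N = 1 := by
    rw [inv_pow, ← pow_mul, mul_comm, pow_mul, hζ.pow_eq_one, one_pow, inv_one]
  have hdft : dft N φ k = fun t => ∑ j ∈ range N, (φ j t : ℂ) * ω ^ j := funext fun t => by
    simp only [dft_eq_sum_mul_inv_pow, ← hζ_def, ω, inv_pow, ← pow_mul, mul_comm k]
  have hrTheta : rTheta ((k : ℝ) / N) ^ 2 = 1 - ω := by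
    rw [rTheta_sq, hω_def, ← exp_nat_mul, ← exp_neg]
    congr 2
    push_cast
    ring
  rw [hdft]
  refine eqOn_Icc_of_hasDerivWithinAt_of_contDiff (v := fun z => z ^ 2 - ε * (1 - ω))
    (by fun_prop) (fun t ht => hφ.hasDerivWithinAt_sum_mul_pow hN hω ht) (fun t ht => ?_) ?_
  · simpa only [hrTheta] using (hasDerivAt_fCat hε hc ht.2 ((k : ℝ) / N)).hasDerivWithinAt
  · rw [hφ.sum_mul_pow_terminal hN, fCat_self hε, hrTheta]

end IsPerRiccatiSol

theorem dft_eq_fCat_and_inversion_general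
    (T ε c : ℝ) (hε : 0 < ε) (hc : 0 ≤ c)
    (N : ℕ) (hN : 2 ≤ N) (φ : ℤ → ℝ → ℝ) (hφ : IsPerRiccatiSol T ε c N φ) :
    (∀ k : ℕ, k < N → ∀ t ∈ Set.Icc (0:ℝ) T,
      dft N φ k t = fCatExt T ε c t ((k : ℝ) / (N : ℝ))) ∧
    (∀ j : ℕ, j < N → ∀ t ∈ Set.Icc (0:ℝ) T,
      (φ (j : ℤ) t : ℂ) =
        (1 / (N : ℂ)) * ∑ k ∈ Finset.range N,
          fCatExt T ε c t ((k : ℝ) / (N : ℝ)) *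
            Complex.exp (2 * Real.pi * Complex.I * (j : ℂ) * (k : ℂ) / (N : ℂ))) := by
  have hdft : ∀ k : ℕ, k < N → ∀ t ∈ Set.Icc (0:ℝ) T,
      dft N φ k t = fCatExt T ε c t ((k : ℝ) / (N : ℝ)) := fun k hk t ht => by
    have hkN : (k : ℝ) / N ≠ 1 :=
      (div_lt_one (by positivity)).mpr (by exact_mod_cast hk) |>.ne
    rw [fCatExt_eq_fCat hkN]
    exact hφ.dft_eqOn_fCat hε hc hN k ht
  refine ⟨hdft, fun j hj t ht => ?_⟩
  rw [← sum_range_dft_mul_exp (by omega) φ hj t]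
  congr 1
  exact sum_congr rfl fun k hk => by rw [hdft k (mem_range.mp hk) t ht]

/-- For a solution `φ_N` of the `N`-periodic Riccati system, the discrete Fourier transform
satisfies `\hatφ_N^k(t) = f_t(k/N)` for `k = 0,…,N-1`, `t ∈ [0,T]` (with `f_t(0) := 0`), and
consequently `φ_N^j(t) = (1/N) ∑_{k=0}^{N-1} f_t(k/N) exp(2π√(−1) jk/N)` for
`j = 0,…,N-1`. -/
theorem dft_eq_fCat_and_inversion
    (T ε c : ℝ) (hT : 0 < T) (hε : 0 < ε) (hc : 0 ≤ c)
    (N : ℕ) (hN : 2 ≤ N) (φ : ℤ → ℝ → ℝ) (hφ : IsPerRiccatiSol T ε c N φ) :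
    (∀ k : ℕ, k < N → ∀ t ∈ Set.Icc (0:ℝ) T,
      dft N φ k t = fCatExt T ε c t ((k : ℝ) / (N : ℝ))) ∧
    (∀ j : ℕ, j < N → ∀ t ∈ Set.Icc (0:ℝ) T,
      (φ (j : ℤ) t : ℂ) =
        (1 / (N : ℂ)) * ∑ k ∈ Finset.range N,
          fCatExt T ε c t ((k : ℝ) / (N : ℝ)) *
            Complex.exp (2 * Real.pi * Complex.I * (j : ℂ) * (k : ℂ) / (N : ℂ))) :=
  dft_eq_fCat_and_inversion_general T ε c hε hc N hN φ hφ
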